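/- Interleaving stability of the dimension function for surjective modules: let M, N : ℝ^d → Vec be persistence modules all of whose structure maps are surjective. If M and N are ε-interleaved, then for every a ∈ ℝ^d, dim(M_a) ≥ dim(N_{a + 2ε·𝟙}) and dim(N_a) ≥ dim(M_{a + 2ε·𝟙}). Hence d_I(dm(M), dm(N)) ≤ 2 · d_I^Vec(M, N), where dm(M)(a) = dim M_a. -/
import Mathlib


namespace Stmt7

/-- A persistence module over the poset `ℝ^d`, valued in vector spaces over `K`. -/
structure PersMod (K : Type) [Field K] (d : ℕ) where
  V : (Fin d → ℝ) → Type
  [addgrp : ∀ a, AddCommGroup (V a)]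
  [mod : ∀ a, Module K (V a)]
  map : ∀ a b : Fin d → ℝ, a ≤ b → (V a →ₗ[K] V b)
  map_id : ∀ a (h : a ≤ a), map a a h = LinearMap.id
  map_comp : ∀ a b c (hab : a ≤ b) (hbc : b ≤ c),
    (map b c hbc).comp (map a b hab) = map a c (le_trans hab hbc)

attribute [instance] PersMod.addgrp PersMod.mod

/-- A persistence module is surjective if all its structure maps are surjective. -/
def PersMod.Surjective {K : Type} [Field K] {d : ℕ} (M : PersMod K d) : Prop :=
  ∀ a b (h : a ≤ b), Function.Surjective (M.map a b h)

def shift {d : ℕ} (a : Fin d → ℝ) (ε : ℝ) : Fin d → ℝ := fun i => a i + ε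

/-- interleaving stability of the dimension function for surjective
modules: if surjective `M`, `N` are `ε`-interleaved, then for all `a`,
`dim N(a+2ε𝟙) ≤ dim M(a)` and `dim M(a+2ε𝟙) ≤ dim N(a)`. -/
theorem dimension_function_stability {K : Type} [Field K] {d : ℕ}
    (M N : PersMod K d) (hM : M.Surjective) (hN : N.Surjective)
    (ε : ℝ) (hε : 0 ≤ ε)
    (f : ∀ a : Fin d → ℝ, M.V a →ₗ[K] N.V (shift a ε))
    (g : ∀ a : Fin d → ℝ, N.V a →ₗ[K] M.V (shift a ε))
    (hf_nat : ∀ a b (h : a ≤ b) (h' : shift a ε ≤ shift b ε),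
      (N.map (shift a ε) (shift b ε) h').comp (f a) = (f b).comp (M.map a b h))
    (hg_nat : ∀ a b (h : a ≤ b) (h' : shift a ε ≤ shift b ε),
      (M.map (shift a ε) (shift b ε) h').comp (g a) = (g b).comp (N.map a b h))
    (hgf : ∀ a (h : a ≤ shift (shift a ε) ε),
      (g (shift a ε)).comp (f a) = M.map a (shift (shift a ε) ε) h)
    (hfg : ∀ a (h : a ≤ shift (shift a ε) ε),
      (f (shift a ε)).comp (g a) = N.map a (shift (shift a ε) ε) h) :
    ∀ a : Fin d → ℝ,
      Module.rank K (N.V (shift (shift a ε) ε)) ≤ Module.rank K (M.V a) ∧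
      Module.rank K (M.V (shift (shift a ε) ε)) ≤ Module.rank K (N.V a) := by
  intro a
  have hle : ∀ b : Fin d → ℝ, b ≤ shift b ε := fun b i => by
    simp [shift]; linarith
  have hle2 : ∀ b : Fin d → ℝ, b ≤ shift (shift b ε) ε := fun b =>
    le_trans (hle b) (hle _)
  constructor
  · -- rank N(a+2ε) ≤ rank M(a+ε) ≤ rank M(a)
    have hsurj : Function.Surjective (f (shift a ε)) := by
      have h := hfg a (hle2 a)
      have : Function.Surjective ((f (shift a ε)).comp (g a)) := by
        rw [h]; exact hN a _ (hle2 a)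
      exact Function.Surjective.of_comp this
    calc Module.rank K (N.V (shift (shift a ε) ε))
        ≤ Module.rank K (M.V (shift a ε)) := LinearMap.rank_le_of_surjective _ hsurj
      _ ≤ Module.rank K (M.V a) := LinearMap.rank_le_of_surjective _ (hM a _ (hle a))
  · have hsurj : Function.Surjective (g (shift a ε)) := by
      have h := hgf a (hle2 a)
      have : Function.Surjective ((g (shift a ε)).comp (f a)) := by
        rw [h]; exact hM a _ (hle2 a)
      exact Function.Surjective.of_comp this
    calc Module.rank K (M.V (shift (shift a ε) ε))
        ≤ Module.rank K (N.V (shift a ε)) := LinearMap.rank_le_of_surjective _ hsurj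
      _ ≤ Module.rank K (N.V a) := LinearMap.rank_le_of_surjective _ (hN a _ (hle a))

end Stmt7
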